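/- arXiv:2311.05517 — 2 statements merged into one kernel-verified Lean document; each statement's English description precedes it below -/
import Mathlib

section
/- For all positive integers m and n there exist a set P of m distinct points in ℝ² and n distinct positive real numbers c₁, …, c_n such that every point (x, y) ∈ P satisfies y = cos(c_j · x) for every j = 1, …, n. In particular, the m points of P and the n pairwise distinct curves { (x, y) ∈ ℝ² : y = cos(c_j x) } determine exactly m·n incidences. -/
/-!
Take the frequencies `cⱼ = j + 1` and the points `(2πk, 1)`, `k < m`: since `cⱼ · 2πk` is an
integer multiple of `2π`, every point lies on every curve. Distinct positive frequencies give
distinct curves because `x = π / b` separates `cos (a x)` from `cos (b x) = -1` when `a < b`.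
-/

open Real

def cosCurve (a : ℝ) : Set (ℝ × ℝ) :=
  {p | p.2 = cos (a * p.1)}

theorem cos_mul_lt_cos_mul_of_lt {a b : ℝ} (ha : 0 < a) (hab : a < b) :
    cos (b * (π / b)) < cos (a * (π / b)) := by
  have hb : 0 < b := ha.trans hab
  have hx : 0 < π / b := div_pos pi_pos hb
  rw [mul_div_cancel₀ π hb.ne']
  exact cos_lt_cos_of_nonneg_of_le_pi (mul_pos ha hx).le le_rfl
    (by simpa [mul_div_cancel₀ π hb.ne'] using mul_lt_mul_of_pos_right hab hx)

theorem cosCurve_injOn : Set.InjOn cosCurve (Set.Ioi 0) := by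
  intro a ha b hb hab
  by_contra hne
  have key : ∀ x, cos (a * x) = cos (b * x) := fun x =>
    show (x, cos (a * x)) ∈ cosCurve b from hab ▸ rfl
  rcases lt_or_gt_of_ne hne with h | h
  · exact (cos_mul_lt_cos_mul_of_lt ha h).ne' (key _)
  · exact (cos_mul_lt_cos_mul_of_lt hb h).ne (key _)

theorem cos_natCast_mul_two_pi_mul (j k : ℕ) : cos (j * (2 * π * k)) = 1 := by
  rw [show (j : ℝ) * (2 * π * k) = ((j * k : ℕ) : ℝ) * (2 * π) by push_cast; ring]
  exact cos_nat_mul_two_pi _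

theorem ncard_setOf_mem_and_of_forall {α ι : Type*} [Fintype ι] {P : Finset α}
    {R : α → ι → Prop} (hR : ∀ p ∈ P, ∀ i, R p i) :
    {x : α × ι | x.1 ∈ P ∧ R x.1 x.2}.ncard = P.card * Fintype.card ι := by
  have : {x : α × ι | x.1 ∈ P ∧ R x.1 x.2} = ↑(P ×ˢ (Finset.univ : Finset ι)) := by
    ext ⟨p, i⟩
    simp only [Set.mem_ofPred_eq, Finset.coe_product, Finset.coe_univ, Set.mem_prod,
      Finset.mem_coe, Set.mem_univ, and_true]
    exact ⟨And.left, fun hp => ⟨hp, hR p hp i⟩⟩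
  rw [this, Set.ncard_coe_finset, Finset.card_product, Finset.card_univ]

theorem cos_scalings_many_incidences_general (m n : ℕ) :
    ∃ (P : Finset (ℝ × ℝ)) (c : Fin n → ℝ),
      P.card = m ∧
      (∀ j, 0 < c j) ∧
      Function.Injective c ∧
      Function.Injective (fun j => {p : ℝ × ℝ | p.2 = Real.cos (c j * p.1)}) ∧
      (∀ p ∈ P, ∀ j : Fin n, p.2 = Real.cos (c j * p.1)) ∧
      Set.ncard {x : (ℝ × ℝ) × Fin n | x.1 ∈ P ∧ x.1.2 = Real.cos (c x.2 * x.1.1)} =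
        m * n := by
  let c : Fin n → ℝ := fun j => ((j + 1 : ℕ) : ℝ)
  let P := (Finset.range m).image fun k : ℕ => (2 * π * k, (1 : ℝ))
  have hc_pos : ∀ j, 0 < c j := fun j => by positivity
  have hcurve : Function.Injective (cosCurve ∘ c) := fun i j hij =>
    Fin.ext (by simpa [c] using cosCurve_injOn (hc_pos i) (hc_pos j) hij)
  have hcard : P.card = m := by
    rw [Finset.card_image_of_injective _ fun k l h => by simpa [pi_ne_zero] using h,
      Finset.card_range]
  have hinc : ∀ p ∈ P, ∀ j, p.2 = cos (c j * p.1) := by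
    simp only [P, Finset.mem_image]
    rintro _ ⟨k, -, rfl⟩ j
    exact (cos_natCast_mul_two_pi_mul _ k).symm
  refine ⟨P, c, hcard, hc_pos, hcurve.of_comp, hcurve, hinc, ?_⟩
  rw [ncard_setOf_mem_and_of_forall hinc, hcard, Fintype.card_fin]

/-- For all `m, n` there are `m` points and `n` distinct scalings `y = cos(cⱼ·x)` of the
cosine curve such that every point lies on every curve, giving exactly `m·n` incidences. -/
theorem cos_scalings_many_incidences (m n : ℕ) (hm : 0 < m) (hn : 0 < n) :
    ∃ (P : Finset (ℝ × ℝ)) (c : Fin n → ℝ),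
      P.card = m ∧
      (∀ j, 0 < c j) ∧
      Function.Injective c ∧
      Function.Injective (fun j => {p : ℝ × ℝ | p.2 = Real.cos (c j * p.1)}) ∧
      (∀ p ∈ P, ∀ j : Fin n, p.2 = Real.cos (c j * p.1)) ∧
      Set.ncard {x : (ℝ × ℝ) × Fin n | x.1 ∈ P ∧ x.1.2 = Real.cos (c x.2 * x.1.1)} =
        m * n :=
  cos_scalings_many_incidences_general m n
end

section
/- There exists a constant c > 0 such that for every positive integer n there exist a set P of n distinct points in ℝ², each with positive first coordinate, and n distinct pairs (a₁, b₁), …, (a_n, b_n) ∈ ℝ² such that the number of pairs (p, j) with p = (x, y) ∈ P and y = a_j·ln x + b_j is at least c·n^{4/3}. -/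
/-!
Erdős's grid: each of the `2r³` lines `y = a x + b` with `a < r`, `b < 2r²` meets the `8r³`
lattice points of `[0, 2r) × [0, 4r²)` in `2r` points, giving `4r⁴ ≍ n^{4/3}` incidences.
The injection `(x, y) ↦ (eˣ, y)` turns the line `y = a x + b` into the curve `y = a ln x + b`
and preserves incidences; unused points and lines pad the configuration to exactly `n` of each.
-/

open Finset

variable {α β α' β' ι : Type*}

def incidences (R : α → β → Prop) (P : Finset α) (L : Finset β) : Set (α × β) :=
  {x | x.1 ∈ P ∧ x.2 ∈ L ∧ R x.1 x.2}

section Incidences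

variable (R : α → β → Prop)

theorem incidences_finite (P : Finset α) (L : Finset β) : (incidences R P L).Finite :=
  (P ×ˢ L).finite_toSet.subset fun _ hx => mem_product.2 ⟨hx.1, hx.2.1⟩

theorem ncard_incidences_mono {P P' : Finset α} {L L' : Finset β} (hP : P ⊆ P') (hL : L ⊆ L') :
    (incidences R P L).ncard ≤ (incidences R P' L').ncard :=
  Set.ncard_le_ncard (fun _ hx => ⟨hP hx.1, hL hx.2.1, hx.2.2⟩) (incidences_finite R P' L')

theorem ncard_incidences_map {R' : α' → β' → Prop} (f : α ↪ α') (g : β ↪ β')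
    (hR : ∀ p l, R' (f p) (g l) ↔ R p l) (P : Finset α) (L : Finset β) :
    (incidences R' (P.map f) (L.map g)).ncard = (incidences R P L).ncard := by
  have himage : incidences R' (P.map f) (L.map g) = Prod.map f g '' incidences R P L := by
    ext ⟨p', l'⟩
    constructor
    · rintro ⟨hp', hl', h⟩
      obtain ⟨p, hp, rfl⟩ := mem_map.1 hp'
      obtain ⟨l, hl, rfl⟩ := mem_map.1 hl'
      exact ⟨(p, l), ⟨hp, hl, (hR p l).1 h⟩, rfl⟩
    · rintro ⟨⟨p, l⟩, ⟨hp, hl, h⟩, hpl⟩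
      cases hpl
      exact ⟨mem_map_of_mem f hp, mem_map_of_mem g hl, (hR p l).2 h⟩
  rw [himage, Set.ncard_image_of_injective _ (f.injective.prodMap g.injective)]

theorem ncard_indexed_incidences (P : Finset α) (L : Finset β) (e : ι ≃ L) :
    {x : α × ι | x.1 ∈ P ∧ R x.1 (e x.2)}.ncard = (incidences R P L).ncard := by
  have himage : Prod.map id (fun i => (e i : β)) '' {x : α × ι | x.1 ∈ P ∧ R x.1 (e x.2)} =
      incidences R P L := by
    ext ⟨p, l⟩
    constructor
    · rintro ⟨⟨p, i⟩, ⟨hp, h⟩, hpl⟩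
      cases hpl
      exact ⟨hp, (e i).2, h⟩
    · rintro ⟨hp, hl, h⟩
      exact ⟨(p, e.symm ⟨l, hl⟩), ⟨hp, by simpa using h⟩, by simp⟩
  rw [← himage]
  exact (Set.ncard_image_of_injective _
    (Function.injective_id.prodMap (Subtype.val_injective.comp e.injective))).symm

end Incidences

def OnLine {S : Type*} [Semiring S] (p ℓ : S × S) : Prop :=
  p.2 = ℓ.1 * p.1 + ℓ.2

def OnLogCurve (p ℓ : ℝ × ℝ) : Prop :=
  p.2 = ℓ.1 * Real.log p.1 + ℓ.2

theorem ncard_incidences_grid (k s t : ℕ) :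
    k * (s * t) ≤
      (incidences OnLine (range k ×ˢ range (s * k + t)) (range s ×ˢ range t)).ncard := by
  set φ : ℕ × ℕ × ℕ → (ℕ × ℕ) × (ℕ × ℕ) := fun x => ((x.1, x.2.1 * x.1 + x.2.2), x.2)
  have hφ : φ.Injective := by
    rintro ⟨x, ℓ⟩ ⟨x', ℓ'⟩ h
    simp only [φ, Prod.mk.injEq] at h
    rw [h.1.1, h.2]
  have hsub : φ '' ↑(range k ×ˢ (range s ×ˢ range t)) ⊆
      incidences OnLine (range k ×ˢ range (s * k + t)) (range s ×ˢ range t) := by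
    rintro _ ⟨⟨x, a, b⟩, hxab, rfl⟩
    simp only [coe_product, coe_range, Set.mem_prod, Set.mem_Iio] at hxab
    obtain ⟨hx, ha, hb⟩ := hxab
    refine ⟨?_, ?_, rfl⟩
    · simpa using ⟨hx, Nat.add_lt_add (Nat.mul_lt_mul'' ha hx) hb⟩
    · simpa using ⟨ha, hb⟩
  calc k * (s * t) = (φ '' ↑(range k ×ˢ (range s ×ˢ range t))).ncard := by
        rw [Set.ncard_image_of_injective _ hφ, Set.ncard_coe_finset]
        simp only [card_product, card_range]
    _ ≤ _ := Set.ncard_le_ncard hsub (incidences_finite _ _ _)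

theorem exists_cube_bracket (n : ℕ) : ∃ r, 8 * r ^ 3 ≤ n ∧ n < 8 * (r + 1) ^ 3 := by
  induction n with
  | zero => exact ⟨0, le_rfl, by norm_num⟩
  | succ n ih =>
    obtain ⟨r, hle, hlt⟩ := ih
    by_cases h : n + 1 < 8 * (r + 1) ^ 3
    · exact ⟨r, hle.trans n.le_succ, h⟩
    · refine ⟨r + 1, by omega, ?_⟩
      have : (r + 1) ^ 3 < (r + 1 + 1) ^ 3 := Nat.pow_lt_pow_left (by omega) (by norm_num)
      omega

theorem rpow_four_thirds_le_of_le_cube {x m : ℝ} (hx : 0 ≤ x) (hm : 0 ≤ m) (h : x ≤ m ^ 3) :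
    x ^ (4 / 3 : ℝ) ≤ m ^ 4 :=
  calc x ^ (4 / 3 : ℝ) ≤ (m ^ 3) ^ (4 / 3 : ℝ) := by gcongr
    _ = m ^ 4 := by
      rw [← Real.rpow_natCast, ← Real.rpow_mul hm, ← Real.rpow_natCast]
      norm_num

noncomputable def natCastPair : ℕ × ℕ ↪ ℝ × ℝ :=
  Nat.castEmbedding.prodMap Nat.castEmbedding

noncomputable def expFstNatCast : ℕ × ℕ ↪ ℝ × ℝ :=
  (Nat.castEmbedding.trans ⟨Real.exp, Real.exp_injective⟩).prodMap Nat.castEmbedding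

theorem onLogCurve_expFstNatCast_iff (p ℓ : ℕ × ℕ) :
    OnLogCurve (expFstNatCast p) (natCastPair ℓ) ↔ OnLine p ℓ := by
  simp only [OnLogCurve, OnLine, expFstNatCast, natCastPair]
  simp [Real.log_exp]
  norm_cast

theorem exists_lineConfig_card_le {n : ℕ} (hn : 0 < n) :
    ∃ Q L : Finset (ℕ × ℕ), #Q ≤ n ∧ #L ≤ n ∧
      (n : ℝ) ^ (4 / 3 : ℝ) / 64 ≤ (incidences OnLine Q L).ncard := by
  obtain ⟨r, hr, hn_lt⟩ := exists_cube_bracket n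
  rcases r.eq_zero_or_pos with rfl | hr0
  · -- for `n < 8` a single incidence already beats `n^{4/3} / 64`
    refine ⟨{(0, 0)}, {(0, 0)}, by simpa, by simpa, ?_⟩
    have hone : 1 ≤ (incidences OnLine {((0 : ℕ), (0 : ℕ))} {(0, 0)}).ncard :=
      (Set.ncard_pos (incidences_finite _ _ _)).2
        ⟨((0, 0), (0, 0)), mem_singleton_self _, mem_singleton_self _, rfl⟩
    have h16 : (n : ℝ) ^ (4 / 3 : ℝ) ≤ 2 ^ 4 :=
      rpow_four_thirds_le_of_le_cube n.cast_nonneg zero_le_two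
        (by exact_mod_cast (by omega : n ≤ 2 ^ 3))
    have : (1 : ℝ) ≤ _ := Nat.one_le_cast.2 hone
    linarith
  · refine ⟨range (2 * r) ×ˢ range (r * (2 * r) + 2 * r ^ 2), range r ×ˢ range (2 * r ^ 2),
      ?_, ?_, ?_⟩
    · simp only [card_product, card_range]
      linarith
    · simp only [card_product, card_range]
      nlinarith
    · have hcube : n ≤ (4 * r) ^ 3 := by
        have : (r + 1) ^ 3 ≤ (2 * r) ^ 3 := Nat.pow_le_pow_left (by omega) 3
        linarith
      have h4r : (n : ℝ) ^ (4 / 3 : ℝ) ≤ (4 * r : ℝ) ^ 4 :=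
        rpow_four_thirds_le_of_le_cube n.cast_nonneg (by positivity) (by exact_mod_cast hcube)
      have hgrid := ncard_incidences_grid (2 * r) r (2 * r ^ 2)
      have : ((2 * r * (r * (2 * r ^ 2)) : ℕ) : ℝ) ≤ _ := Nat.cast_le.2 hgrid
      push_cast at this
      nlinarith

theorem exists_lineConfig_card_eq {n : ℕ} (hn : 0 < n) :
    ∃ Q L : Finset (ℕ × ℕ), #Q = n ∧ #L = n ∧
      (n : ℝ) ^ (4 / 3 : ℝ) / 64 ≤ (incidences OnLine Q L).ncard := by
  obtain ⟨Q, L, hQ, hL, hI⟩ := exists_lineConfig_card_le hn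
  obtain ⟨Q', hQQ', hQ'⟩ := Infinite.exists_superset_card_eq Q n hQ
  obtain ⟨L', hLL', hL'⟩ := Infinite.exists_superset_card_eq L n hL
  exact ⟨Q', L', hQ', hL', hI.trans (by exact_mod_cast ncard_incidences_mono OnLine hQQ' hLL')⟩

/-- A lower-bound construction with logarithmic curves: there are `n` points (with positive
first coordinates) and `n` distinct curves `y = a·ln x + b` with at least `c·n^{4/3}`
incidences. -/
theorem log_curves_many_incidences :
    ∃ c : ℝ, 0 < c ∧
      ∀ n : ℕ, 0 < n →
        ∃ (P : Finset (ℝ × ℝ)) (ab : Fin n → ℝ × ℝ),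
          P.card = n ∧
          (∀ p ∈ P, 0 < p.1) ∧
          Function.Injective ab ∧
          c * (n : ℝ) ^ ((4 : ℝ) / 3) ≤
            (Set.ncard {x : (ℝ × ℝ) × Fin n |
                x.1 ∈ P ∧ x.1.2 = (ab x.2).1 * Real.log x.1.1 + (ab x.2).2} : ℝ) := by
  refine ⟨1 / 64, by norm_num, fun n hn => ?_⟩
  obtain ⟨Q, L, hQ, hL, hI⟩ := exists_lineConfig_card_eq hn
  set e := ((L.map natCastPair).equivFinOfCardEq (by rw [card_map, hL])).symm
  refine ⟨Q.map expFstNatCast, fun j => e j, by rw [card_map, hQ], ?_,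
    Subtype.val_injective.comp e.injective, ?_⟩
  · simp only [mem_map, forall_exists_index, and_imp, forall_apply_eq_imp_iff₂]
    exact fun _ _ => Real.exp_pos _
  · calc 1 / 64 * (n : ℝ) ^ ((4 : ℝ) / 3) ≤ (incidences OnLine Q L).ncard := by linarith
      _ = (incidences OnLogCurve (Q.map expFstNatCast) (L.map natCastPair)).ncard := by
        rw [ncard_incidences_map OnLine expFstNatCast natCastPair onLogCurve_expFstNatCast_iff]
      _ = _ := by rw [← ncard_indexed_incidences OnLogCurve _ _ e]; rfl
end
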